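/- arXiv:1612.02194 — 2 statements merged into one kernel-verified Lean document; each statement's English description precedes it below -/
import Mathlib

section
/- Newton's shell theorem in the plane: if f : ℝ² → ℝ is radially symmetric and integrable with ∫ |f(y)| |ln|y|| dy < ∞, then for every x ≠ 0, ∫_{ℝ²} ln|x−y| f(y) dy = ln|x| ∫_{B_{|x|}} f(y) dy + ∫_{ℝ²∖B_{|x|}} ln|y| f(y) dy. -/
/-!
Since `f` is radial, rotating the kernel does not change `∫ log ‖x - y‖ f y dy`, so it equals the
average over `θ` of `∫ log ‖x - e^{iθ} y‖ f y dy`. By Fubini the kernel is replaced by its circle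
average, which by the mean value property of the harmonic function `log ‖x - ·‖` (Jensen's formula)
is `log (max ‖x‖ ‖y‖)`; splitting the plane at `‖y‖ = ‖x‖` gives the two terms.
-/

open Real MeasureTheory Metric

lemma circleMap_zero_one_mul (z : ℂ) (θ : ℝ) :
    circleMap 0 1 θ * z = circleMap 0 ‖z‖ (θ + Complex.arg z) := by
  conv_lhs => rw [← Complex.norm_mul_exp_arg_mul_I z]
  simp only [circleMap_zero, Complex.ofReal_one, one_mul, Complex.ofReal_add, add_mul,
    Complex.exp_add]
  ring

lemma CircleIntegrable.intervalIntegrable_comp_circleMap_mul {E : Type*} [NormedAddCommGroup E]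
    {g : ℂ → E} {z : ℂ} (hg : CircleIntegrable g 0 ‖z‖) :
    IntervalIntegrable (fun θ => g (circleMap 0 1 θ * z)) volume 0 (2 * π) := by
  have hper : Function.Periodic (fun θ => g (circleMap 0 ‖z‖ θ)) (2 * π) := fun θ => by
    simp only [periodic_circleMap 0 ‖z‖ θ]
  simp_rw [circleMap_zero_one_mul]
  simpa using (hper.intervalIntegrable₀ two_pi_pos.ne' hg (Complex.arg z)
    (2 * π + Complex.arg z)).comp_add_right (Complex.arg z)

lemma circleAverage_eq_integral_comp_circleMap_mul {E : Type*} [NormedAddCommGroup E]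
    [NormedSpace ℝ E] (g : ℂ → E) (z : ℂ) :
    circleAverage g 0 ‖z‖ = (2 * π)⁻¹ • ∫ θ in 0..2 * π, g (circleMap 0 1 θ * z) := by
  simp_rw [circleMap_zero_one_mul]
  exact circleAverage_eq_integral_add (Complex.arg z)

lemma circleAverage_log_norm_const_sub (c : ℂ) {R : ℝ} (hR : 0 ≤ R) :
    circleAverage (fun w => log ‖c - w‖) 0 R = log (max ‖c‖ R) := by
  rcases hR.eq_or_lt with rfl | hR
  · simp
  simp_rw [norm_sub_rev c]
  rw [circleAverage_log_norm_sub_const_eq_log_radius_add_posLog hR.ne', zero_sub, norm_neg]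
  rcases le_or_gt ‖c‖ R with hc | hc
  · rw [max_eq_right hc, (posLog_eq_zero_iff _).2, add_zero]
    rw [abs_of_nonneg (by positivity)]
    exact inv_mul_le_one_of_le₀ hc hR.le
  · rw [max_eq_left hc.le, posLog_eq_log, log_mul (inv_pos.2 hR).ne' (hR.trans hc).ne', log_inv]
    · ring
    · rw [abs_of_nonneg (by positivity)]
      exact (one_le_inv_mul₀ hR).2 hc.le

lemma circleAverage_abs_log_norm_const_sub_le (c : ℂ) {R : ℝ} (hR : 0 ≤ R) :
    circleAverage (fun w => |log ‖c - w‖|) 0 R ≤ 2 * log 2 + 3 * |log ‖c‖| + 3 * |log R| := by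
  set p : ℂ → ℝ := fun w => log ‖c - w‖
  have hp : CircleIntegrable p 0 R := by
    simpa only [p, norm_sub_rev c] using circleIntegrable_log_norm_sub_const (a := c) (c := 0) R
  -- `p + |p| = 2 log⁺ ‖c - ·‖` is bounded on the circle, and the average of `p` is known.
  have habs : (fun w => |p w|) = (p + |p|) - p := by
    funext w; simp
  have hpos : circleAverage (p + |p|) 0 R ≤ 2 * (|log ‖c‖| + |log R| + log 2) := by
    refine circleAverage_mono_on_of_le_circle (hp.add hp.abs) fun w hw => ?_
    have hw : ‖w‖ = R := by simpa [abs_of_nonneg hR] using hw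
    calc (p + |p|) w = 2 * log⁺ ‖c + -w‖ := by
          rw [← sub_eq_add_neg, ← half_mul_log_add_log_abs]; simp [p]
      _ ≤ 2 * (log⁺ ‖c‖ + log⁺ ‖-w‖ + log 2) := by linarith [posLog_norm_add_le c (-w)]
      _ ≤ 2 * (|log ‖c‖| + |log R| + log 2) := by
          rw [norm_neg, hw, ← half_mul_log_add_log_abs, ← half_mul_log_add_log_abs]
          gcongr <;> linarith [le_abs_self (log ‖c‖), le_abs_self (log R)]
  have hmax : -log (max ‖c‖ R) ≤ |log ‖c‖| + |log R| := by
    rcases le_total ‖c‖ R with h | h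
    · rw [max_eq_right h]; linarith [neg_le_abs (log R), abs_nonneg (log ‖c‖)]
    · rw [max_eq_left h]; linarith [neg_le_abs (log ‖c‖), abs_nonneg (log R)]
  rw [habs, circleAverage_sub (hp.add hp.abs) hp, circleAverage_log_norm_const_sub c hR]
  linarith

lemma integral_comp_circleMap_mul {E : Type*} [NormedAddCommGroup E] [NormedSpace ℝ E]
    (G : ℂ → E) (θ : ℝ) : ∫ z, G (circleMap 0 1 θ * z) = ∫ z, G z := by
  simpa [rotation_apply, Circle.coe_exp, circleMap_zero] using
    (rotation (Circle.exp θ)).measurePreserving.integral_comp'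
      (f := (rotation (Circle.exp θ)).toMeasurableEquiv) G

lemma integral_log_norm_sub_circleMap_mul (c z : ℂ) :
    ∫ θ in 0..2 * π, log ‖c - circleMap 0 1 θ * z‖ = 2 * π * log (max ‖c‖ ‖z‖) := by
  rw [← circleAverage_log_norm_const_sub c (norm_nonneg z),
    circleAverage_eq_integral_comp_circleMap_mul, smul_eq_mul, mul_inv_cancel_left₀ two_pi_pos.ne']

section Radial

variable {F : ℂ → ℝ}

lemma integrable_log_norm_sub_circleMap_mul_prod (hF : Integrable F)
    (hlog : Integrable fun z => |F z| * |log ‖z‖|) (c : ℂ) :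
    Integrable (fun p : ℝ × ℂ => log ‖c - circleMap 0 1 p.1 * p.2‖ * F p.2)
      ((volume.restrict (Set.Ioc 0 (2 * π))).prod volume) := by
  have hmeas : AEStronglyMeasurable (fun p : ℝ × ℂ => log ‖c - circleMap 0 1 p.1 * p.2‖ * F p.2)
      ((volume.restrict (Set.Ioc 0 (2 * π))).prod volume) :=
    (by fun_prop : Continuous fun p : ℝ × ℂ => ‖c - circleMap 0 1 p.1 * p.2‖).measurable.log
      |>.aestronglyMeasurable.mul hF.aestronglyMeasurable.comp_snd
  have hsection (z : ℂ) :
      IntervalIntegrable (fun θ => log ‖c - circleMap 0 1 θ * z‖) volume 0 (2 * π) := by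
    refine CircleIntegrable.intervalIntegrable_comp_circleMap_mul (g := fun w => log ‖c - w‖) ?_
    simpa only [norm_sub_rev c] using circleIntegrable_log_norm_sub_const (a := c) (c := 0) ‖z‖
  have hbound (z : ℂ) : ∫ θ in 0..2 * π, |log ‖c - circleMap 0 1 θ * z‖|
      ≤ 2 * π * (2 * log 2 + 3 * |log ‖c‖|) + 6 * π * |log ‖z‖| := by
    have h := circleAverage_abs_log_norm_const_sub_le c (norm_nonneg z)
    rw [circleAverage_eq_integral_comp_circleMap_mul, smul_eq_mul,
      inv_mul_le_iff₀ two_pi_pos] at h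
    linarith
  rw [integrable_prod_iff' hmeas]
  refine ⟨.of_forall fun z => ((hsection z).mul_const (F z)).1, ?_⟩
  refine ((hF.abs.const_mul (2 * π * (2 * log 2 + 3 * |log ‖c‖|))).add
    (hlog.const_mul (6 * π))).mono' hmeas.norm.prod_swap.integral_prod_right'
      (.of_forall fun z => ?_)
  simp only [norm_mul, Real.norm_eq_abs, integral_mul_const, abs_abs, Pi.add_apply]
  rw [← intervalIntegral.integral_of_le two_pi_pos.le,
    abs_of_nonneg (intervalIntegral.integral_nonneg two_pi_pos.le fun _ _ => abs_nonneg _)]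
  nlinarith [hbound z, abs_nonneg (F z)]

theorem integral_log_norm_sub_mul_eq_integral_log_max_mul
    (hrad : ∀ z w : ℂ, ‖z‖ = ‖w‖ → F z = F w) (hF : Integrable F)
    (hlog : Integrable fun z => |F z| * |log ‖z‖|) (c : ℂ) :
    ∫ z, log ‖c - z‖ * F z = ∫ z, log (max ‖c‖ ‖z‖) * F z := by
  have hrot (θ : ℝ) : ∫ z, log ‖c - circleMap 0 1 θ * z‖ * F z = ∫ z, log ‖c - z‖ * F z := by
    rw [← integral_comp_circleMap_mul (fun z => log ‖c - z‖ * F z) θ]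
    congr! 3 with z
    exact hrad _ _ (by simp)
  have hswap := integral_integral_swap (f := fun θ z => log ‖c - circleMap 0 1 θ * z‖ * F z)
    (integrable_log_norm_sub_circleMap_mul_prod hF hlog c)
  simp only [hrot, ← intervalIntegral.integral_of_le two_pi_pos.le, intervalIntegral.integral_const,
    intervalIntegral.integral_mul_const, integral_log_norm_sub_circleMap_mul, sub_zero,
    smul_eq_mul, mul_assoc, integral_const_mul] at hswap
  exact mul_left_cancel₀ pi_pos.ne' (mul_left_cancel₀ two_ne_zero hswap)

end Radial

section Plane

variable {E : Type*} [NormedAddCommGroup E] [InnerProductSpace ℝ E] [FiniteDimensional ℝ E]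
  [MeasurableSpace E] [BorelSpace E]

theorem integral_log_norm_sub_mul_eq_integral_log_max_mul_of_finrank_eq_two
    (hE : Module.finrank ℝ E = 2) {f : E → ℝ} (hrad : ∀ x y : E, ‖x‖ = ‖y‖ → f x = f y)
    (hf : Integrable f) (hlog : Integrable fun y => |f y| * |log ‖y‖|) (x : E) :
    ∫ y, log ‖x - y‖ * f y = ∫ y, log (max ‖x‖ ‖y‖) * f y := by
  let e : ℂ ≃ₗᵢ[ℝ] E := Complex.orthonormalBasisOneI.repr.trans
    ((stdOrthonormalBasis ℝ E).reindex (finCongr hE)).repr.symm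
  have hmp := e.measurePreserving
  have hemb := e.toMeasurableEquiv.measurableEmbedding
  have key := integral_log_norm_sub_mul_eq_integral_log_max_mul (F := f ∘ e)
    (fun z w h => hrad _ _ (by simpa using h)) ((hmp.integrable_comp_emb hemb).2 hf)
    (by simpa [Function.comp_def] using (hmp.integrable_comp_emb hemb).2 hlog) (e.symm x)
  rw [← hmp.integral_comp' (f := e.toMeasurableEquiv),
    ← hmp.integral_comp' (f := e.toMeasurableEquiv)]
  have hdist (z : ℂ) : ‖x - e z‖ = ‖e.symm x - z‖ := by
    rw [← e.norm_map, map_sub, e.apply_symm_apply]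
  simpa [hdist] using key

end Plane

section Split

variable {E : Type*} [NormedAddCommGroup E] [MeasurableSpace E] [OpensMeasurableSpace E]
  {μ : Measure E} {f : E → ℝ}

lemma integrable_log_max_norm_mul (hf : Integrable f μ)
    (hlog : Integrable (fun y => |f y| * |log ‖y‖|) μ) (r : ℝ) :
    Integrable (fun y => log (max r ‖y‖) * f y) μ := by
  refine ((hf.abs.const_mul |log r|).add hlog).mono'
    ((measurable_const.max measurable_norm).log.aestronglyMeasurable.mul hf.aestronglyMeasurable)
    (.of_forall fun y => ?_)
  simp only [norm_mul, Real.norm_eq_abs, Pi.add_apply]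
  rcases le_total r ‖y‖ with h | h
  · rw [max_eq_right h]; nlinarith [abs_nonneg (log r), abs_nonneg (f y)]
  · rw [max_eq_left h]; nlinarith [abs_nonneg (log ‖y‖), abs_nonneg (f y)]

lemma integral_log_max_norm_mul (hf : Integrable f μ)
    (hlog : Integrable (fun y => |f y| * |log ‖y‖|) μ) (r : ℝ) :
    ∫ y, log (max r ‖y‖) * f y ∂μ
      = log r * ∫ y in ball 0 r, f y ∂μ + ∫ y in (ball 0 r)ᶜ, log ‖y‖ * f y ∂μ := by
  rw [← integral_add_compl measurableSet_ball (integrable_log_max_norm_mul hf hlog r),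
    ← integral_const_mul]
  congr 1
  · refine setIntegral_congr_fun measurableSet_ball fun y hy => ?_
    rw [max_eq_left (mem_ball_zero_iff.1 hy).le]
  · refine setIntegral_congr_fun measurableSet_ball.compl fun y hy => ?_
    rw [max_eq_right (not_lt.1 (mt mem_ball_zero_iff.2 hy))]

end Split

theorem newton_shell_plane_general (f : EuclideanSpace ℝ (Fin 2) → ℝ)
    (hrad : ∀ x y : EuclideanSpace ℝ (Fin 2), ‖x‖ = ‖y‖ → f x = f y)
    (hf : Integrable f)
    (hlog : Integrable (fun y => |f y| * |Real.log ‖y‖|))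
    (x : EuclideanSpace ℝ (Fin 2)) :
    (∫ y, Real.log ‖x - y‖ * f y)
      = Real.log ‖x‖ * (∫ y in Metric.ball (0 : EuclideanSpace ℝ (Fin 2)) ‖x‖, f y)
        + ∫ y in (Metric.ball (0 : EuclideanSpace ℝ (Fin 2)) ‖x‖)ᶜ, Real.log ‖y‖ * f y := by
  rw [integral_log_norm_sub_mul_eq_integral_log_max_mul_of_finrank_eq_two
    finrank_euclideanSpace_fin hrad hf hlog x]
  exact integral_log_max_norm_mul hf hlog ‖x‖

/-- Newton's shell theorem in the plane. -/
theorem newton_shell_plane (f : EuclideanSpace ℝ (Fin 2) → ℝ)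
    (hrad : ∀ x y : EuclideanSpace ℝ (Fin 2), ‖x‖ = ‖y‖ → f x = f y)
    (hf : Integrable f)
    (hlog : Integrable (fun y => |f y| * |Real.log ‖y‖|))
    (x : EuclideanSpace ℝ (Fin 2)) (hx : x ≠ 0) :
    (∫ y, Real.log ‖x - y‖ * f y)
      = Real.log ‖x‖ * (∫ y in Metric.ball (0 : EuclideanSpace ℝ (Fin 2)) ‖x‖, f y)
        + ∫ y in (Metric.ball (0 : EuclideanSpace ℝ (Fin 2)) ‖x‖)ᶜ, Real.log ‖y‖ * f y :=
  newton_shell_plane_general f hrad hf hlog x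
end

section
/- Let V ∈ C(ℝ²) satisfy V(x)/ln|x| → λ > 0 as |x| → ∞, and let τ > √λ. Define W_τ(x) = exp(−τ |x| √(ln |x|)) for |x| > 1. Then there exists R > 1 such that −ΔW_τ + V W_τ ≤ 0 on ℝ² ∖ B_R. -/
open Real Filter

/-- The Laplacian on ℝ², as the sum of second partial derivatives. -/
noncomputable def planarLaplacian (f : EuclideanSpace ℝ (Fin 2) → ℝ)
    (x : EuclideanSpace ℝ (Fin 2)) : ℝ :=
  ∑ i : Fin 2, deriv (deriv (fun t : ℝ => f (x + t • EuclideanSpace.single i 1))) 0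

/-!
A radial function `h (‖x‖)` on the plane has Laplacian `h'' + h' / r`. For `W_τ = exp (φ (‖x‖))`
with `φ r = -τ r √(log r)` this is `(φ'' + φ' ^ 2 + φ' / r) W_τ`, and `φ' ^ 2 ≥ τ ^ 2 (log r + 1)`
while `φ''` and `φ' / r` are `O (√(log r) / r)`. Since `λ < τ ^ 2`, eventually
`V ≤ τ ^ 2 log r ≤ φ'' + φ' ^ 2 + φ' / r`, i.e. `V W_τ ≤ ΔW_τ`.
-/

open Topology
open scoped InnerProductSpace

theorem HasDerivAt.norm {F : Type*} [NormedAddCommGroup F] [InnerProductSpace ℝ F]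
    {f : ℝ → F} {f' : F} {t : ℝ} (hf : HasDerivAt f f' t) (h0 : f t ≠ 0) :
    HasDerivAt (fun s => ‖f s‖) (⟪f t, f'⟫_ℝ / ‖f t‖) t := by
  have hpos : 0 < ‖f t‖ := norm_pos_iff.2 h0
  have h := hf.norm_sq.sqrt (by positivity)
  simp only [sqrt_sq (norm_nonneg _)] at h
  convert h using 1
  field_simp

section Radial

variable {E : Type*} [NormedAddCommGroup E] [InnerProductSpace ℝ E]

theorem deriv_deriv_radial_along_line {h h' : ℝ → ℝ} {h'' : ℝ} {W : E → ℝ} {x : E} (v : E)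
    (hx : x ≠ 0) (hW : ∀ᶠ y in 𝓝 x, W y = h ‖y‖)
    (hh : ∀ᶠ s in 𝓝 ‖x‖, HasDerivAt h (h' s) s) (hh' : HasDerivAt h' h'' ‖x‖) :
    deriv (deriv fun t : ℝ => W (x + t • v)) 0 =
      h'' * (⟪x, v⟫_ℝ / ‖x‖) ^ 2
        + h' ‖x‖ * (‖v‖ ^ 2 / ‖x‖ - ⟪x, v⟫_ℝ ^ 2 / ‖x‖ ^ 3) := by
  have hline : ∀ t : ℝ, HasDerivAt (fun t : ℝ => x + t • v) v t := fun t => by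
    simpa using ((hasDerivAt_id t).smul_const v).const_add x
  set line : ℝ → E := fun t => x + t • v
  have hline0 : line 0 = x := by simp [line]
  have hcont : Tendsto line (𝓝 0) (𝓝 x) := hline0 ▸ (hline 0).continuousAt.tendsto
  have hnorm : Tendsto (fun t => ‖line t‖) (𝓝 0) (𝓝 ‖x‖) := hcont.norm
  have hr : 0 < ‖x‖ := norm_pos_iff.2 hx
  have hderiv : deriv (fun t => W (line t)) =ᶠ[𝓝 0]
      fun t => h' ‖line t‖ * (⟪line t, v⟫_ℝ / ‖line t‖) := by
    have hW' : (fun t => W (line t)) =ᶠ[𝓝 0] fun t => h ‖line t‖ := hcont.eventually hW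
    filter_upwards [hW'.eventuallyEq_nhds, hcont.eventually_ne hx, hnorm.eventually hh]
      with t hWt hne hht
    rw [hWt.deriv_eq]
    exact (hht.comp t ((hline t).norm hne)).deriv
  rw [hderiv.deriv_eq]
  have hn0 : HasDerivAt (fun t => ‖line t‖) (⟪x, v⟫_ℝ / ‖x‖) 0 := by
    simpa [hline0] using (hline 0).norm (hline0 ▸ hx)
  have hA := hh'.comp_of_eq 0 hn0 (by rw [hline0])
  have hB := ((hline 0).inner ℝ (hasDerivAt_const 0 v)).div hn0 (by rwa [hline0, norm_ne_zero_iff])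
  simp only [hline0, inner_zero_right, zero_add, real_inner_self_eq_norm_sq] at hB
  refine (hA.mul hB).deriv.trans ?_
  simp only [Pi.div_apply, Function.comp_apply, hline0]
  field_simp

end Radial

theorem planarLaplacian_radial {h h' : ℝ → ℝ} {h'' : ℝ} {W : EuclideanSpace ℝ (Fin 2) → ℝ}
    {x : EuclideanSpace ℝ (Fin 2)} (hx : x ≠ 0) (hW : ∀ᶠ y in 𝓝 x, W y = h ‖y‖)
    (hh : ∀ᶠ s in 𝓝 ‖x‖, HasDerivAt h (h' s) s) (hh' : HasDerivAt h' h'' ‖x‖) :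
    planarLaplacian W x = h'' + h' ‖x‖ / ‖x‖ := by
  have hr : 0 < ‖x‖ := norm_pos_iff.2 hx
  have hsum := EuclideanSpace.real_norm_sq_eq x
  simp only [planarLaplacian, Fin.sum_univ_two, deriv_deriv_radial_along_line _ hx hW hh hh',
    EuclideanSpace.inner_single_right, PiLp.norm_single, conj_trivial] at hsum ⊢
  have hx0 : x 0 ^ 2 = ‖x‖ ^ 2 - x 1 ^ 2 := by linarith
  simp only [norm_one, one_pow, one_mul, div_pow, hx0]
  field_simp
  ring

noncomputable def phi (τ s : ℝ) : ℝ := -τ * s * √(log s)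

noncomputable def phiDeriv (τ s : ℝ) : ℝ := -τ * (√(log s) + (2 * √(log s))⁻¹)

noncomputable def phiDeriv2 (τ s : ℝ) : ℝ :=
  -τ * ((2 * s * √(log s))⁻¹ - (4 * s * log s * √(log s))⁻¹)

theorem hasDerivAt_sqrt_log {s : ℝ} (hs : 1 < s) :
    HasDerivAt (fun u => √(log u)) ((2 * s * √(log s))⁻¹) s := by
  refine ((hasDerivAt_log (by positivity)).sqrt (log_pos hs).ne').congr_deriv ?_
  field_simp

theorem hasDerivAt_phi (τ : ℝ) {s : ℝ} (hs : 1 < s) :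
    HasDerivAt (phi τ) (phiDeriv τ s) s := by
  have hc : 0 < √(log s) := sqrt_pos.2 (log_pos hs)
  refine (((hasDerivAt_id s).const_mul (-τ)).mul (hasDerivAt_sqrt_log hs)).congr_deriv ?_
  simp only [phiDeriv, id]
  field_simp
  ring

theorem hasDerivAt_phiDeriv (τ : ℝ) {s : ℝ} (hs : 1 < s) :
    HasDerivAt (phiDeriv τ) (phiDeriv2 τ s) s := by
  have hL : 0 < log s := log_pos hs
  have hc : 0 < √(log s) := sqrt_pos.2 hL
  refine (((hasDerivAt_sqrt_log hs).add
    (((hasDerivAt_sqrt_log hs).const_mul 2).inv (by positivity))).const_mul (-τ)).congr_deriv ?_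
  have hlog : log s = √(log s) ^ 2 := (sq_sqrt hL.le).symm
  rw [phiDeriv2]
  generalize √(log s) = c at hc hlog ⊢
  rw [hlog]
  field_simp
  ring

theorem hasDerivAt_exp_phi (τ : ℝ) {s : ℝ} (hs : 1 < s) :
    HasDerivAt (fun u => exp (phi τ u)) (phiDeriv τ s * exp (phi τ s)) s :=
  (hasDerivAt_phi τ hs).exp.congr_deriv (mul_comm _ _)

theorem hasDerivAt_phiDeriv_mul_exp_phi (τ : ℝ) {s : ℝ} (hs : 1 < s) :
    HasDerivAt (fun u => phiDeriv τ u * exp (phi τ u))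
      ((phiDeriv2 τ s + phiDeriv τ s ^ 2) * exp (phi τ s)) s :=
  ((hasDerivAt_phiDeriv τ hs).mul (hasDerivAt_phi τ hs).exp).congr_deriv (by ring)

noncomputable def laplacianRatio (τ r : ℝ) : ℝ :=
  phiDeriv2 τ r + phiDeriv τ r ^ 2 + phiDeriv τ r / r

theorem planarLaplacian_eq_of_one_lt_norm {τ : ℝ} {W : EuclideanSpace ℝ (Fin 2) → ℝ}
    (hW : ∀ x : EuclideanSpace ℝ (Fin 2), 1 < ‖x‖ → W x = exp (-τ * ‖x‖ * √(log ‖x‖)))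
    {x : EuclideanSpace ℝ (Fin 2)} (hx : 1 < ‖x‖) :
    planarLaplacian W x = laplacianRatio τ ‖x‖ * exp (phi τ ‖x‖) := by
  have hW' : ∀ᶠ y in 𝓝 x, W y = exp (phi τ ‖y‖) := by
    filter_upwards [(isOpen_lt continuous_const continuous_norm).mem_nhds hx] with y hy
    exact hW y hy
  have hh : ∀ᶠ s in 𝓝 ‖x‖,
      HasDerivAt (fun u => exp (phi τ u)) (phiDeriv τ s * exp (phi τ s)) s := by
    filter_upwards [Ioi_mem_nhds hx] with s hs
    exact hasDerivAt_exp_phi τ hs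
  rw [planarLaplacian_radial (norm_pos_iff.1 (one_pos.trans hx)) hW' hh
    (hasDerivAt_phiDeriv_mul_exp_phi τ hx), laplacianRatio]
  ring

theorem sq_mul_log_le_of_sqrt_log_add_two_le {τ r : ℝ} (hτ : 0 < τ) (hL : 1 ≤ log r)
    (hr : √(log r) + 2 ≤ τ * r) :
    τ ^ 2 * log r ≤ laplacianRatio τ r := by
  have hc : 1 ≤ √(log r) := one_le_sqrt.2 hL
  have hlog : log r = √(log r) ^ 2 := (sq_sqrt (zero_le_one.trans hL)).symm
  have hr0 : 0 < r := by nlinarith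
  rw [laplacianRatio, phiDeriv, phiDeriv2]
  generalize √(log r) = c at hc hlog hr ⊢
  rw [hlog]
  have hc0 : 0 < c := one_pos.trans_le hc
  have hsq : τ ^ 2 * (c ^ 2 + 1) ≤ (-τ * (c + (2 * c)⁻¹)) ^ 2 := by
    rw [neg_mul, neg_sq, mul_pow]
    gcongr
    field_simp
    nlinarith
  have hsecond : -(τ / r) ≤ -τ * ((2 * r * c)⁻¹ - (4 * r * c ^ 2 * c)⁻¹) := by
    have h1 : (2 * r * c)⁻¹ ≤ r⁻¹ := inv_anti₀ hr0 (by nlinarith)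
    have h2 : 0 ≤ (4 * r * c ^ 2 * c)⁻¹ := by positivity
    rw [neg_mul, neg_le_neg_iff, div_eq_mul_inv]
    gcongr
    linarith
  have hfirst : -(τ * (c + 1) / r) ≤ -τ * (c + (2 * c)⁻¹) / r := by
    have h1 : (2 * c)⁻¹ ≤ 1 := inv_le_one_of_one_le₀ (by linarith)
    rw [neg_mul, neg_div, neg_le_neg_iff]
    gcongr
  have hsmall : τ * (c + 2) / r ≤ τ ^ 2 := by
    rw [div_le_iff₀ hr0]
    nlinarith
  have : τ / r + τ * (c + 1) / r = τ * (c + 2) / r := by ring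
  linarith

theorem eventually_sq_mul_log_le {τ : ℝ} (hτ : 0 < τ) :
    ∀ᶠ r in atTop, τ ^ 2 * log r ≤ laplacianRatio τ r := by
  filter_upwards [eventually_ge_atTop (exp 1), eventually_ge_atTop (4 / τ),
    isLittleO_log_id_atTop.bound (half_pos hτ)] with r hre hrτ hlog
  have hr0 : 0 < r := (exp_pos 1).trans_le hre
  have hL : 1 ≤ log r := (le_log_iff_exp_le hr0).2 hre
  have hsqrt : √(log r) ≤ log r := sqrt_le_self_iff.2 (Or.inr hL)
  rw [norm_of_nonneg (zero_le_one.trans hL), id, norm_of_nonneg hr0.le] at hlog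
  have h2 : 2 ≤ τ / 2 * r := by
    rw [div_le_iff₀ hτ] at hrτ
    linarith
  exact sq_mul_log_le_of_sqrt_log_add_two_le hτ hL (by linarith)

theorem subsolution_log_potential_general (V : EuclideanSpace ℝ (Fin 2) → ℝ)
    (lam : ℝ)
    (hVlim : Tendsto (fun x => V x / Real.log ‖x‖)
      (Bornology.cobounded (EuclideanSpace ℝ (Fin 2))) (nhds lam))
    (τ : ℝ) (hτ : Real.sqrt lam < τ)
    (W : EuclideanSpace ℝ (Fin 2) → ℝ)
    (hW : ∀ x : EuclideanSpace ℝ (Fin 2), 1 < ‖x‖ →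
      W x = Real.exp (-τ * ‖x‖ * Real.sqrt (Real.log ‖x‖))) :
    ∃ R : ℝ, 1 < R ∧ ∀ x : EuclideanSpace ℝ (Fin 2), R ≤ ‖x‖ →
      -planarLaplacian W x + V x * W x ≤ 0 := by
  have hτ0 : 0 < τ := (sqrt_nonneg lam).trans_lt hτ
  have hV : ∀ᶠ x in Bornology.cobounded _, V x ≤ τ ^ 2 * log ‖x‖ := by
    have hlog := tendsto_log_atTop.comp
      (tendsto_norm_cobounded_atTop (E := EuclideanSpace ℝ (Fin 2)))
    filter_upwards [hVlim.eventually (gt_mem_nhds ((sqrt_lt' hτ0).1 hτ)),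
      hlog.eventually_gt_atTop 0] with x hVx hx
    exact ((div_lt_iff₀ hx).1 hVx).le
  have hrad : ∀ᶠ x in Bornology.cobounded (EuclideanSpace ℝ (Fin 2)), 1 < ‖x‖ ∧
      τ ^ 2 * log ‖x‖ ≤ laplacianRatio τ ‖x‖ :=
    tendsto_norm_cobounded_atTop.eventually
      ((eventually_gt_atTop 1).and (eventually_sq_mul_log_le hτ0))
  obtain ⟨R, -, hR⟩ := Filter.hasBasis_cobounded_norm.eventually_iff.1 (hV.and hrad)
  refine ⟨max R 2, one_lt_two.trans_le (le_max_right R 2), fun x hx => ?_⟩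
  obtain ⟨hVx, hx1, hineq⟩ := hR (le_of_max_le_left hx)
  have hWx : W x = exp (phi τ ‖x‖) := hW x hx1
  rw [planarLaplacian_eq_of_one_lt_norm hW hx1, hWx]
  linarith [mul_le_mul_of_nonneg_right (hVx.trans hineq) (exp_pos (phi τ ‖x‖)).le]

theorem subsolution_log_potential (V : EuclideanSpace ℝ (Fin 2) → ℝ) (hV : Continuous V)
    (lam : ℝ) (hlam : 0 < lam)
    (hVlim : Tendsto (fun x => V x / Real.log ‖x‖)
      (Bornology.cobounded (EuclideanSpace ℝ (Fin 2))) (nhds lam))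
    (τ : ℝ) (hτ : Real.sqrt lam < τ)
    (W : EuclideanSpace ℝ (Fin 2) → ℝ)
    (hW : ∀ x : EuclideanSpace ℝ (Fin 2), 1 < ‖x‖ →
      W x = Real.exp (-τ * ‖x‖ * Real.sqrt (Real.log ‖x‖))) :
    ∃ R : ℝ, 1 < R ∧ ∀ x : EuclideanSpace ℝ (Fin 2), R ≤ ‖x‖ →
      -planarLaplacian W x + V x * W x ≤ 0 :=
  subsolution_log_potential_general V lam hVlim τ hτ W hW
end
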